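/- Let F₁, F₂ : ℝ → ℝ be C¹ bijections with positive derivatives f₁ = F₁' and f₂ = F₂'. Let u(x,y) = H₁(x) + H₂(y) with H₁' = F₁⁻¹ and H₂'(y) = F₂⁻¹(−y). Then u satisfies u_xx / f₂(u_y) + 2·B̃(x,y)·u_xy + u_yy / f₁(u_x) = 0 on ℝ² for any function B̃ : ℝ² → ℝ, and u is not affine. -/

import Mathlib

noncomputable def ux (u : ℝ → ℝ → ℝ) (x y : ℝ) : ℝ := deriv (fun t => u t y) x
noncomputable def uy (u : ℝ → ℝ → ℝ) (x y : ℝ) : ℝ := deriv (fun t => u x t) y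
noncomputable def uxx (u : ℝ → ℝ → ℝ) (x y : ℝ) : ℝ := deriv (fun t => ux u t y) x
noncomputable def uxy (u : ℝ → ℝ → ℝ) (x y : ℝ) : ℝ := deriv (fun t => ux u x t) y
noncomputable def uyy (u : ℝ → ℝ → ℝ) (x y : ℝ) : ℝ := deriv (fun t => uy u x t) y

def IsAffine (u : ℝ → ℝ → ℝ) : Prop := ∃ a b c : ℝ, ∀ x y : ℝ, u x y = a * x + b * y + c

/-! Both `u_x = F₁⁻¹(x)` and `u_y = F₂⁻¹(-y)` depend on one variable only, so `u_xy = 0`, while by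
the inverse function rule `u_xx = 1 / f₁(u_x)` and `u_yy = -1 / f₂(u_y)`; the two remaining terms of
the equation cancel. Since `u_x = F₁⁻¹` is injective, `u` is not affine. -/

open Function

section InverseOfPositiveDerivative

variable {F : ℝ → ℝ}

lemma strictMono_invFun_of_deriv_pos (hs : Surjective F) (hp : ∀ t, 0 < deriv F t) :
    StrictMono (invFun F) := fun a b hab => by
  rw [← (strictMono_of_deriv_pos hp).lt_iff_lt, rightInverse_invFun hs a, rightInverse_invFun hs b]
  exact hab

lemma continuous_invFun_of_deriv_pos (hs : Surjective F) (hp : ∀ t, 0 < deriv F t) :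
    Continuous (invFun F) :=
  (strictMono_invFun_of_deriv_pos hs hp).monotone.continuous_of_surjective
    (leftInverse_invFun (strictMono_of_deriv_pos hp).injective).surjective

lemma hasDerivAt_invFun_of_deriv_pos (hs : Surjective F) (hp : ∀ t, 0 < deriv F t) (a : ℝ) :
    HasDerivAt (invFun F) (deriv F (invFun F a))⁻¹ a :=
  HasDerivAt.of_local_left_inverse (continuous_invFun_of_deriv_pos hs hp).continuousAt
    (differentiableAt_of_deriv_ne_zero (hp _).ne').hasDerivAt (hp _).ne'
    (.of_forall (rightInverse_invFun hs))

end InverseOfPositiveDerivative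

section Separated

variable {u : ℝ → ℝ → ℝ} {H₁ H₂ h₁ h₂ : ℝ → ℝ}

lemma ux_eq_of_separated (hu : ∀ x y, u x y = H₁ x + H₂ y) (hH₁ : ∀ x, HasDerivAt H₁ (h₁ x) x) :
    ux u = fun x _ => h₁ x := by
  ext x y
  exact ((hH₁ x).add_const (H₂ y)).congr_of_eventuallyEq (.of_forall (hu · y)) |>.deriv

lemma uy_eq_of_separated (hu : ∀ x y, u x y = H₁ x + H₂ y) (hH₂ : ∀ y, HasDerivAt H₂ (h₂ y) y) :
    uy u = fun _ y => h₂ y := by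
  ext x y
  exact ((hH₂ y).const_add (H₁ x)).congr_of_eventuallyEq (.of_forall (hu x ·)) |>.deriv

end Separated

lemma IsAffine.ux_eq {u : ℝ → ℝ → ℝ} (hu : IsAffine u) : ∃ a, ∀ x y, ux u x y = a := by
  obtain ⟨a, b, c, habc⟩ := hu
  refine ⟨a, fun x y => ?_⟩
  have hline : HasDerivAt (fun t => a * t + (b * y + c)) a x := by
    simpa using ((hasDerivAt_id x).const_mul a).add_const (b * y + c)
  exact hline.congr_of_eventuallyEq (.of_forall fun t => by simp only [habc]; ring) |>.deriv

theorem stmt7_general (F₁ F₂ : ℝ → ℝ)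
    (hb₁ : Function.Bijective F₁) (hb₂ : Function.Bijective F₂)
    (hp₁ : ∀ t : ℝ, 0 < deriv F₁ t) (hp₂ : ∀ t : ℝ, 0 < deriv F₂ t)
    (H₁ H₂ : ℝ → ℝ)
    (hH₁ : ∀ x : ℝ, HasDerivAt H₁ (Function.invFun F₁ x) x)
    (hH₂ : ∀ y : ℝ, HasDerivAt H₂ (Function.invFun F₂ (-y)) y)
    (u : ℝ → ℝ → ℝ) (hu : ∀ x y : ℝ, u x y = H₁ x + H₂ y) :
    (∀ B : ℝ → ℝ → ℝ, ∀ x y : ℝ,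
      uxx u x y / deriv F₂ (uy u x y) + 2 * B x y * uxy u x y +
      uyy u x y / deriv F₁ (ux u x y) = 0) ∧ ¬ IsAffine u := by
  have hux := ux_eq_of_separated hu hH₁
  have huy := uy_eq_of_separated hu hH₂
  constructor
  · intro B x y
    have huxx : uxx u x y = (deriv F₁ (invFun F₁ x))⁻¹ := by
      rw [uxx, hux, (hasDerivAt_invFun_of_deriv_pos hb₁.2 hp₁ x).deriv]
    have huyy : uyy u x y = -(deriv F₂ (invFun F₂ (-y)))⁻¹ := by
      rw [uyy, huy, deriv_comp_neg, (hasDerivAt_invFun_of_deriv_pos hb₂.2 hp₂ (-y)).deriv]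
    have huxy : uxy u x y = 0 := by
      rw [uxy, hux, deriv_const]
    rw [huxx, huxy, huyy, hux, huy]
    ring
  · intro haff
    obtain ⟨a, ha⟩ := haff.ux_eq
    have h01 : invFun F₁ 0 = invFun F₁ 1 := by
      simpa only [hux] using (ha 0 0).trans (ha 1 0).symm
    simpa [rightInverse_invFun hb₁.2 _] using congrArg F₁ h01

theorem stmt7 (F₁ F₂ : ℝ → ℝ) (hF₁ : ContDiff ℝ 1 F₁) (hF₂ : ContDiff ℝ 1 F₂)
    (hb₁ : Function.Bijective F₁) (hb₂ : Function.Bijective F₂)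
    (hp₁ : ∀ t : ℝ, 0 < deriv F₁ t) (hp₂ : ∀ t : ℝ, 0 < deriv F₂ t)
    (H₁ H₂ : ℝ → ℝ)
    (hH₁ : ∀ x : ℝ, HasDerivAt H₁ (Function.invFun F₁ x) x)
    (hH₂ : ∀ y : ℝ, HasDerivAt H₂ (Function.invFun F₂ (-y)) y)
    (u : ℝ → ℝ → ℝ) (hu : ∀ x y : ℝ, u x y = H₁ x + H₂ y) :
    (∀ B : ℝ → ℝ → ℝ, ∀ x y : ℝ,
      uxx u x y / deriv F₂ (uy u x y) + 2 * B x y * uxy u x y +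
      uyy u x y / deriv F₁ (ux u x y) = 0) ∧ ¬ IsAffine u :=
  stmt7_general F₁ F₂ hb₁ hb₂ hp₁ hp₂ H₁ H₂ hH₁ hH₂ u hu
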